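/- For every brick (rectangular box) B = [a₁,b₁]×⋯×[a_d,b_d] in ℝ^d and every interior point c of B, the number of equilibrium points of B with respect to c is exactly 3^d − 1. -/

import Mathlib

open MeasureTheory
open scoped RealInnerProductSpace

/-- `q ∈ ∂K` is an equilibrium point of `K` with respect to `c`: the hyperplane
through `q` perpendicular to the segment `[c,q]` supports `K`. -/
def IsEquilibriumPoint {d : ℕ} (K : Set (EuclideanSpace ℝ (Fin d)))
    (c q : EuclideanSpace ℝ (Fin d)) : Prop :=
  q ∈ frontier K ∧
    ((∀ x ∈ K, ⟪x - q, q - c⟫ ≤ 0) ∨ (∀ x ∈ K, 0 ≤ ⟪x - q, q - c⟫))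

/-!
Let `K` be closed and `c` an interior point. Testing the support condition at `x = c` rules out
the orientation `0 ≤ ⟪x - q, q - c⟫` unless `q = c`, and along the ray `q + t (q - c)` the other
orientation forbids `q` from being interior; so the equilibrium points are the points `q ≠ c` of
`K` at which `q - c` is an outer normal. For a brick the inner product splits into coordinates,
and `q - c` is an outer normal at `q` exactly when every `qᵢ` is `aᵢ`, `cᵢ` or `bᵢ`. That gives
`3^d` points, one of which is `c` itself.
-/

open Set Filter Topology

section InnerProductSpace

variable {E : Type*} [NormedAddCommGroup E] [InnerProductSpace ℝ E] {K : Set E} {c q : E}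

lemma eq_of_forall_inner_nonneg_of_mem (hc : c ∈ K) (h : ∀ x ∈ K, 0 ≤ ⟪x - q, q - c⟫) :
    q = c := by
  have hcq := h c hc
  rw [← neg_sub q c, inner_neg_left, real_inner_self_eq_norm_sq, neg_nonneg] at hcq
  exact sub_eq_zero.mp (norm_eq_zero.mp (pow_eq_zero_iff two_ne_zero |>.mp
    (le_antisymm hcq (sq_nonneg _))))

lemma notMem_interior_of_forall_inner_nonpos (hqc : q ≠ c)
    (h : ∀ x ∈ K, ⟪x - q, q - c⟫ ≤ 0) : q ∉ interior K := by
  intro hq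
  have hray : Tendsto (fun t : ℝ => q + t • (q - c)) (𝓝[>] 0) (𝓝 q) := by
    have : Continuous fun t : ℝ => q + t • (q - c) := by fun_prop
    simpa using (this.tendsto 0).mono_left nhdsWithin_le_nhds
  obtain ⟨t, htK, ht⟩ :=
    ((hray.eventually (mem_interior_iff_mem_nhds.mp hq)).and self_mem_nhdsWithin).exists
  have hsupp := h _ htK
  rw [add_sub_cancel_left, real_inner_smul_left, real_inner_self_eq_norm_sq] at hsupp
  linarith [mul_pos (mem_Ioi.mp ht) (pow_pos (norm_pos_iff.mpr (sub_ne_zero.mpr hqc)) 2)]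

end InnerProductSpace

lemma isEquilibriumPoint_iff {d : ℕ} {K : Set (EuclideanSpace ℝ (Fin d))}
    {c q : EuclideanSpace ℝ (Fin d)} (hK : IsClosed K) (hc : c ∈ interior K) :
    IsEquilibriumPoint K c q ↔ q ∈ K ∧ q ≠ c ∧ ∀ x ∈ K, ⟪x - q, q - c⟫ ≤ 0 := by
  rw [IsEquilibriumPoint, hK.frontier_eq]
  constructor
  · rintro ⟨⟨hqK, hq⟩, hsupp⟩
    have hqc : q ≠ c := by rintro rfl; exact hq hc
    refine ⟨hqK, hqc, hsupp.resolve_right fun h => hqc ?_⟩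
    exact eq_of_forall_inner_nonneg_of_mem (interior_subset hc) h
  · rintro ⟨hqK, hqc, hsupp⟩
    exact ⟨⟨hqK, notMem_interior_of_forall_inner_nonpos hqc hsupp⟩, Or.inl hsupp⟩

lemma forall_mem_pi_sum_nonpos_iff {ι : Type*} [Fintype ι] {α : ι → Type*}
    {s : ∀ i, Set (α i)} {f : ∀ i, α i → ℝ} {q : ∀ i, α i} (hq : ∀ i, q i ∈ s i)
    (hf : ∀ i, f i (q i) = 0) :
    (∀ x : ∀ i, α i, (∀ i, x i ∈ s i) → ∑ i, f i (x i) ≤ 0) ↔ ∀ i, ∀ t ∈ s i, f i t ≤ 0 := by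
  classical
  refine ⟨fun h i t ht => ?_, fun h x hx => Finset.sum_nonpos fun i _ => h i _ (hx i)⟩
  have hupd := h (Function.update q i t)
    (Function.forall_update_iff q (p := fun j y => y ∈ s j) |>.mpr ⟨ht, fun j _ => hq j⟩)
  rwa [Finset.sum_eq_single i (fun j _ hj => by rw [Function.update_of_ne hj, hf])
    (by simp), Function.update_self] at hupd

lemma mem_Icc_and_forall_sub_mul_sub_nonpos_iff {a b c q : ℝ} (hc : c ∈ Icc a b) :
    (q ∈ Icc a b ∧ ∀ t ∈ Icc a b, (t - q) * (q - c) ≤ 0) ↔ q = a ∨ q = c ∨ q = b := by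
  constructor
  · rintro ⟨⟨haq, hqb⟩, h⟩
    rcases lt_trichotomy q c with hqc | rfl | hqc
    · left; nlinarith [h a ⟨le_rfl, hc.1.trans hc.2⟩]
    · simp
    · right; right; nlinarith [h b ⟨hc.1.trans hc.2, le_rfl⟩]
  · rintro (rfl | rfl | rfl)
    · exact ⟨⟨le_rfl, hc.1.trans hc.2⟩, fun t ht => by nlinarith [ht.1, hc.1]⟩
    · exact ⟨hc, fun t _ => by simp⟩
    · exact ⟨⟨hc.1.trans hc.2, le_rfl⟩, fun t ht => by nlinarith [ht.2, hc.2]⟩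

section Brick

variable {ι : Type*}

def brick (a b : ι → ℝ) : Set (EuclideanSpace ℝ ι) :=
  {x | ∀ i, x i ∈ Icc (a i) (b i)}

lemma brick_eq_preimage_pi (a b : ι → ℝ) :
    brick a b = WithLp.ofLp ⁻¹' pi univ fun i => Icc (a i) (b i) := by
  ext x
  simp only [brick, mem_ofPred_eq, mem_preimage, mem_univ_pi]

lemma isClosed_brick (a b : ι → ℝ) : IsClosed (brick a b) := by
  rw [brick_eq_preimage_pi]
  exact (isClosed_set_pi fun _ _ => isClosed_Icc).preimage (PiLp.continuous_ofLp 2 _)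

lemma interior_brick [Finite ι] (a b : ι → ℝ) :
    interior (brick a b) = {x | ∀ i, x i ∈ Ioo (a i) (b i)} := by
  rw [brick_eq_preimage_pi, ← IsOpenMap.preimage_interior_eq_interior_preimage (f := WithLp.ofLp)
    (PiLp.homeomorph 2 _).isOpenMap (PiLp.continuous_ofLp 2 _), interior_pi_set finite_univ]
  ext x
  simp

lemma forall_mem_brick_inner_sub_nonpos_iff [Fintype ι] {a b : ι → ℝ}
    {c q : EuclideanSpace ℝ ι} (hq : q ∈ brick a b) :
    (∀ x ∈ brick a b, ⟪x - q, q - c⟫ ≤ 0) ↔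
      ∀ i, ∀ t ∈ Icc (a i) (b i), (t - q i) * (q i - c i) ≤ 0 := by
  rw [← forall_mem_pi_sum_nonpos_iff (f := fun i t => (t - q i) * (q i - c i)) hq (by simp)]
  simp only [brick, mem_ofPred_eq, PiLp.inner_apply]
  exact ⟨fun h x hx => by simpa [mul_comm] using h (WithLp.toLp 2 x) hx,
    fun h x hx => by simpa [mul_comm] using h x hx⟩

lemma isEquilibriumPoint_brick_iff {d : ℕ} {a b : Fin d → ℝ} {c q : EuclideanSpace ℝ (Fin d)}
    (hc : c ∈ interior (brick a b)) :
    IsEquilibriumPoint (brick a b) c q ↔ q ≠ c ∧ ∀ i, q i ∈ ({a i, c i, b i} : Finset ℝ) := by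
  have hci : ∀ i, c i ∈ Icc (a i) (b i) := fun i =>
    Ioo_subset_Icc_self (((interior_brick a b).subset hc) i)
  have hcoord := fun i => mem_Icc_and_forall_sub_mul_sub_nonpos_iff (q := q i) (hci i)
  rw [isEquilibriumPoint_iff (isClosed_brick a b) hc, and_left_comm]
  simp only [Finset.mem_insert, Finset.mem_singleton]
  refine and_congr_right fun _ => ⟨fun ⟨hq, hsupp⟩ i => ?_, fun h => ?_⟩
  · exact (hcoord i).mp ⟨hq i, (forall_mem_brick_inner_sub_nonpos_iff hq).mp hsupp i⟩
  · have hq : q ∈ brick a b := fun i => ((hcoord i).mpr (h i)).1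
    exact ⟨hq, (forall_mem_brick_inner_sub_nonpos_iff hq).mpr fun i => ((hcoord i).mpr (h i)).2⟩

end Brick

lemma EuclideanSpace.ncard_setOf_forall_mem {ι : Type*} [Fintype ι] [DecidableEq ι]
    (t : ι → Finset ℝ) :
    {q : EuclideanSpace ℝ ι | ∀ i, q i ∈ t i}.ncard = ∏ i, (t i).card := by
  have : {q : EuclideanSpace ℝ ι | ∀ i, q i ∈ t i} =
      WithLp.toLp 2 '' (Fintype.piFinset t : Set (ι → ℝ)) := by
    ext q
    exact ⟨fun h => ⟨q.ofLp, by simpa using h, rfl⟩, by rintro ⟨x, hx, rfl⟩; simpa using hx⟩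
  rw [this, ncard_image_of_injective _ (WithLp.toLp_injective 2), ncard_coe_finset,
    Fintype.card_piFinset]

theorem stmt_17_general (d : ℕ) (a b : Fin d → ℝ)
    (B : Set (EuclideanSpace ℝ (Fin d)))
    (hB : B = {x : EuclideanSpace ℝ (Fin d) | ∀ i, x i ∈ Set.Icc (a i) (b i)})
    (c : EuclideanSpace ℝ (Fin d)) (hc : c ∈ interior B) :
    {q : EuclideanSpace ℝ (Fin d) | IsEquilibriumPoint B c q}.ncard = 3^d - 1 := by
  obtain rfl : B = brick a b := hB
  have hci : ∀ i, c i ∈ Ioo (a i) (b i) := fun i => ((interior_brick a b).subset hc) i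
  have hthree : ∀ i, ({a i, c i, b i} : Finset ℝ).card = 3 := fun i =>
    Finset.card_eq_three.mpr
      ⟨_, _, _, (hci i).1.ne, ((hci i).1.trans (hci i).2).ne, (hci i).2.ne, rfl⟩
  have hset : {q | IsEquilibriumPoint (brick a b) c q} =
      {q : EuclideanSpace ℝ (Fin d) | ∀ i, q i ∈ ({a i, c i, b i} : Finset ℝ)} \ {c} := by
    ext q
    simp only [mem_ofPred_eq, isEquilibriumPoint_brick_iff hc, Set.mem_sdiff, mem_singleton_iff]
    exact and_comm
  rw [hset, ncard_sdiff_singleton_of_mem (fun i => by simp), EuclideanSpace.ncard_setOf_forall_mem]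
  simp [hthree]

/-- A brick `B = [a₁,b₁] × ⋯ × [a_d,b_d]` has exactly `3^d - 1` equilibrium
points with respect to every interior point. -/
theorem stmt_17 (d : ℕ) (a b : Fin d → ℝ) (hab : ∀ i, a i < b i)
    (B : Set (EuclideanSpace ℝ (Fin d)))
    (hB : B = {x : EuclideanSpace ℝ (Fin d) | ∀ i, x i ∈ Set.Icc (a i) (b i)})
    (c : EuclideanSpace ℝ (Fin d)) (hc : c ∈ interior B) :
    {q : EuclideanSpace ℝ (Fin d) | IsEquilibriumPoint B c q}.ncard = 3^d - 1 :=
  stmt_17_general d a b B hB c hc
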